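/- Let X be a regular (T₃) Hausdorff space, and suppose there exist points x_α ∈ X and open sets U_α with x_α ∈ U_α for α < λ such that x_β ∉ U_α whenever α < β < λ. If λ → (μ,(μ;μ))² holds, then X has a discrete subspace of size μ. -/

import Mathlib

/-!
Shrink each `U α` to an open `V α ∋ x α` with `closure (V α) ⊆ U α` and colour a pair `α < β` by
whether `x α ∈ closure (V β)`. A subsequence `a` along which this never happens is left-separated
by the sets `V (a i)`. In the other alternative `x (a i) ∈ closure (V (b j))` for `i ≤ j`, so at a
successor index `k + 1` the complement of `closure (V (b k))` left-separates `x (a (k + 1))`; there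
are still `μ` indices below `μ.ord` that are `0` or successors. Since `x` is right-separated by `U`,
a subfamily that is also left-separated is injective with discrete range.
-/

open Cardinal

/-- `λ → (ξ;ξ)²_κ`: for every coloring `c` of pairs of ordinals below `λ` into `κ`
there are `ε < κ` and sequences `⟨α_i, β_i : i < ξ⟩` with `α_i < β_i < α_j < λ` for
`i < j` and `c{α_i, β_j} = ε` for `i ≤ j`. -/
def ArrowSq (l : Cardinal) (ξ : Ordinal) (κ : Cardinal) : Prop :=
  ∀ c : Ordinal → Ordinal → Ordinal,
    (∀ α β : Ordinal, α < l.ord → β < l.ord → c α β < κ.ord) →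
    ∃ ε : Ordinal, ε < κ.ord ∧ ∃ a b : Ordinal → Ordinal,
      (∀ i, i < ξ → a i < b i ∧ b i < l.ord) ∧
      (∀ i j, i < j → j < ξ → b i < a j) ∧
      (∀ i j, i ≤ j → j < ξ → c (a i) (b j) = ε)

/-- `λ → (ξ,(ξ;ξ)_κ)²`: for every coloring of pairs below `λ` into `1+κ` there are
`ε < 1+κ` and `α_i < β_i < α_j < λ` (for `i < j < ξ`) such that either `ε = 0` and
`c{α_i,α_j} = 0` for `i < j`, or `ε ≥ 1` and `c{α_i,β_j} = ε` for `i ≤ j`. -/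
def ArrowMixed (l : Cardinal) (ξ : Ordinal) (κ : Cardinal) : Prop :=
  ∀ c : Ordinal → Ordinal → Ordinal,
    (∀ α β : Ordinal, α < l.ord → β < l.ord → c α β < 1 + κ.ord) →
    ∃ ε : Ordinal, ε < 1 + κ.ord ∧ ∃ a b : Ordinal → Ordinal,
      (∀ i, i < ξ → a i < b i ∧ b i < l.ord) ∧
      (∀ i j, i < j → j < ξ → b i < a j) ∧
      ((ε = 0 ∧ ∀ i j, i < j → j < ξ → c (a i) (a j) = 0) ∨
       (1 ≤ ε ∧ ∀ i j, i ≤ j → j < ξ → c (a i) (b j) = ε))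

open Order Set Function

universe u

section Separated

variable {ι κ : Type*} {X : Type u} [LinearOrder ι] [LinearOrder κ] [TopologicalSpace X]

def IsRightSeparated (y : ι → X) (U : ι → Set X) : Prop :=
  (∀ i, IsOpen (U i) ∧ y i ∈ U i) ∧ ∀ i j, i < j → y j ∉ U i

def IsLeftSeparated (y : ι → X) (W : ι → Set X) : Prop :=
  (∀ i, IsOpen (W i) ∧ y i ∈ W i) ∧ ∀ i j, i < j → y i ∉ W j

variable {y : ι → X} {U W : ι → Set X}

theorem IsRightSeparated.injective (hU : IsRightSeparated y U) : Injective y := by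
  intro i j hij
  by_contra hne
  rcases lt_or_gt_of_ne hne with h | h
  · exact hU.2 i j h (hij ▸ (hU.1 i).2)
  · exact hU.2 j i h (hij.symm ▸ (hU.1 j).2)

theorem IsRightSeparated.comp_strictMono (hU : IsRightSeparated y U) {f : κ → ι}
    (hf : StrictMono f) : IsRightSeparated (y ∘ f) (U ∘ f) :=
  ⟨fun i => hU.1 (f i), fun i j h => hU.2 (f i) (f j) (hf h)⟩

theorem isDiscrete_range_of_separated (hU : IsRightSeparated y U) (hW : IsLeftSeparated y W) :
    IsDiscrete (range y) := by
  refine isDiscrete_iff_forall_mem_exists_isOpen.2 ?_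
  rintro _ ⟨i, rfl⟩
  refine ⟨U i ∩ W i, (hU.1 i).1.inter (hW.1 i).1, ?_⟩
  refine Subset.antisymm ?_ (singleton_subset_iff.2 ⟨⟨(hU.1 i).2, (hW.1 i).2⟩, i, rfl⟩)
  rintro _ ⟨⟨hjU, hjW⟩, j, rfl⟩
  rcases lt_trichotomy i j with h | rfl | h
  · exact absurd hjU (hU.2 i j h)
  · rfl
  · exact absurd hjW (hW.2 j i h)

theorem exists_isDiscrete_mk_eq_of_separated {μ : Cardinal.{u}}
    (hμ : Cardinal.lift.{u} #ι = Cardinal.lift μ) (hU : IsRightSeparated y U)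
    (hW : IsLeftSeparated y W) : ∃ D : Set X, #D = μ ∧ IsDiscrete D :=
  ⟨range y, by rw [← Cardinal.lift_inj, Cardinal.mk_range_eq_of_injective hU.injective, hμ],
    isDiscrete_range_of_separated hU hW⟩

end Separated

theorem IsDiscrete.exists_isOpen_mem_inter_eq_singleton {X : Type*} [TopologicalSpace X]
    {D : Set X} (hD : IsDiscrete D) {y : X} (hy : y ∈ D) :
    ∃ V : Set X, IsOpen V ∧ y ∈ V ∧ V ∩ D = {y} := by
  obtain ⟨V, hV, hVD⟩ := isDiscrete_iff_forall_mem_exists_isOpen.1 hD y hy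
  exact ⟨V, hV, (hVD.symm ▸ mem_singleton y : y ∈ V ∩ D).1, hVD⟩

theorem exists_isOpen_mem_closure_subset {X : Type*} [TopologicalSpace X] [RegularSpace X]
    {U : Set X} {x : X} (hU : IsOpen U) (hx : x ∈ U) :
    ∃ V : Set X, IsOpen V ∧ x ∈ V ∧ closure V ⊆ U := by
  obtain ⟨V, ⟨hxV, hV⟩, hVU⟩ := (hasBasis_opens_closure x).mem_iff.1 (hU.mem_nhds hx)
  exact ⟨V, hV, hxV, hVU⟩

theorem ArrowMixed.exists_homogeneous {l : Cardinal} {ξ : Ordinal} (h : ArrowMixed l ξ 1)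
    (P : Ordinal → Ordinal → Prop) :
    ∃ a b : Ordinal → Ordinal,
      (∀ i, i < ξ → a i < b i ∧ b i < l.ord) ∧
      (∀ i j, i < j → j < ξ → b i < a j) ∧
      ((∀ i j, i < j → j < ξ → ¬ P (a i) (a j)) ∨ (∀ i j, i ≤ j → j < ξ → P (a i) (b j))) := by
  classical
  have hc : ∀ α β, α < l.ord → β < l.ord →
      (if P α β then 1 else 0 : Ordinal) < 1 + (1 : Cardinal).ord := by
    intro α β _ _
    split_ifs <;> simp
  obtain ⟨ε, -, a, b, hab, hba, hcol⟩ := h _ hc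
  refine ⟨a, b, hab, hba,
    hcol.imp (fun ⟨_, h0⟩ i j hij hj hP => ?_) (fun ⟨hε, h1⟩ i j hij hj => ?_)⟩
  · simpa [hP] using h0 i j hij hj
  · by_contra hP
    have hε0 := h1 i j hij hj
    simp only [hP, if_false] at hε0
    rw [← hε0] at hε
    exact absurd hε (by simp)

theorem Ordinal.mk_Iio_not_isSuccLimit (o : Ordinal.{u}) :
    #{t ∈ Iio o | ¬ IsSuccLimit t} = Cardinal.lift.{u + 1} o.card := by
  classical
  refine le_antisymm
    ((Cardinal.mk_le_mk_of_subset (sep_subset _ _)).trans_eq (Cardinal.mk_Iio_ordinal o)) ?_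
  rw [← Cardinal.mk_Iio_ordinal]
  -- every `k < o` but a last one has its successor below `o`; the last one goes to `0`
  let ψ : Ordinal → Ordinal := fun k => if succ k < o then succ k else 0
  have hψ : ∀ k < o, ψ k ∈ {t ∈ Iio o | ¬ IsSuccLimit t} := by
    intro k hk
    by_cases h : succ k < o
    · simp only [ψ, if_pos h]
      exact ⟨h, not_isSuccLimit_succ k⟩
    · simp only [ψ, if_neg h]
      exact ⟨zero_le.trans_lt hk, Ordinal.not_isSuccLimit_zero⟩
  refine Cardinal.mk_le_of_injective (f := fun k => ⟨ψ k, hψ k k.2⟩) ?_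
  rintro ⟨k, hk⟩ ⟨k', hk'⟩ h
  simp only [Subtype.mk.injEq, ψ] at h ⊢
  split_ifs at h with h₁ h₂ h₂
  · exact succ_injective h
  · exact absurd h (succ_ne_bot k)
  · exact absurd h.symm (succ_ne_bot k')
  · exact le_antisymm (lt_succ_iff.1 (hk.trans_le (not_lt.1 h₂)))
      (lt_succ_iff.1 (hk'.trans_le (not_lt.1 h₁)))

-- The only non-limit ordinal that is a successor prelimit is `0`, which needs no separating set.
open Classical in
theorem isLeftSeparated_nonLimit_of_mem_closed {X : Type*} [TopologicalSpace X] {ξ : Ordinal}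
    {y : Ordinal → X} {F : Ordinal → Set X} (hF : ∀ k, IsClosed (F k))
    (hmem : ∀ s k, s ≤ k → k < ξ → y s ∈ F k) (hnot : ∀ k, succ k < ξ → y (succ k) ∉ F k) :
    IsLeftSeparated (fun t : {t ∈ Iio ξ | ¬ IsSuccLimit t} => y t)
      (fun t => if IsSuccPrelimit (t : Ordinal) then univ else (F (Ordinal.pred t))ᶜ) := by
  refine ⟨fun t => ?_, fun s t hst => ?_⟩ <;> dsimp only <;> split_ifs with ht
  · exact ⟨isOpen_univ, mem_univ _⟩
  · have hsucc := Ordinal.succ_pred_eq_iff_not_isSuccPrelimit.2 ht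
    refine ⟨(hF _).isOpen_compl, ?_⟩
    have hnot_t := hnot (Ordinal.pred t) (by rw [hsucc]; exact t.2.1)
    rwa [hsucc] at hnot_t
  · exact absurd hst (((not_isSuccLimit_iff.1 t.2.2).resolve_right (not_not.2 ht)).not_lt)
  · have hsucc := Ordinal.succ_pred_eq_iff_not_isSuccPrelimit.2 ht
    have hpt : Ordinal.pred t < ξ := (Ordinal.pred_le_self _).trans_lt t.2.1
    exact not_not.2 (hmem s _ (lt_succ_iff.1 (by rw [hsucc]; exact hst)) hpt)

/-- If `X` is a regular Hausdorff (T₃) space with a right-separated sequence of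
length `λ` (witnessing `hL⁺(X) > λ`) and `λ → (μ,(μ;μ))²` holds, then `X` has a
discrete subspace of size `μ`. -/
theorem discrete_of_rightSeparated {X : Type*} [TopologicalSpace X] [T3Space X]
    (l μ : Cardinal) (x : Ordinal → X) (U : Ordinal → Set X)
    (hU : ∀ α, α < l.ord → IsOpen (U α) ∧ x α ∈ U α)
    (hsep : ∀ α β, α < β → β < l.ord → x β ∉ U α)
    (hpart : ArrowMixed l μ.ord 1) :
    ∃ D : Set X, Cardinal.mk ↥D = μ ∧
      ∀ y ∈ D, ∃ V : Set X, IsOpen V ∧ y ∈ V ∧ V ∩ D = {y} := by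
  suffices ∃ D : Set X, #D = μ ∧ IsDiscrete D by
    obtain ⟨D, hDμ, hD⟩ := this
    exact ⟨D, hDμ, fun y hy => hD.exists_isOpen_mem_inter_eq_singleton hy⟩
  choose! V hV hxV hVU using fun α hα => exists_isOpen_mem_closure_subset (hU α hα).1 (hU α hα).2
  obtain ⟨a, b, hab, hba, hhom⟩ := hpart.exists_homogeneous fun α β => x α ∈ closure (V β)
  have ha_lt : ∀ i < μ.ord, a i < l.ord := fun i hi => (hab i hi).1.trans (hab i hi).2
  have hxa : ∀ S ⊆ Iio μ.ord, IsRightSeparated (fun t : S => x (a t)) (fun t => U (a t)) := by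
    intro S hS
    have hx : IsRightSeparated (fun α : Iio l.ord => x α) (fun α => U α) :=
      ⟨fun α => hU α α.2, fun α β h => hsep α β h β.2⟩
    refine hx.comp_strictMono (f := fun t : S => ⟨a t, ha_lt t (hS t.2)⟩) ?_
    exact fun s t (h : (s : Ordinal) < t) => (hab s (h.trans (hS t.2))).1.trans (hba s t h (hS t.2))
  rcases hhom with h0 | h1
  · refine exists_isDiscrete_mk_eq_of_separated (by simp) (hxa _ subset_rfl)
      (W := fun i : Iio μ.ord => V (a i)) ⟨fun i => ⟨hV _ (ha_lt i i.2), hxV _ (ha_lt i i.2)⟩, ?_⟩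
    exact fun i j h hmem => h0 i j h j.2 (subset_closure hmem)
  · refine exists_isDiscrete_mk_eq_of_separated (by rw [Ordinal.mk_Iio_not_isSuccLimit]; simp)
      (hxa _ (sep_subset _ _))
      (isLeftSeparated_nonLimit_of_mem_closed (fun _ => isClosed_closure) h1 ?_)
    intro k hk hmem
    exact hsep _ _ (hba k (succ k) (lt_succ k) hk) (ha_lt _ hk)
      (hVU _ ((hab k ((lt_succ k).trans hk)).2) hmem)
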